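/- arXiv:2102.07702 — 2 statements merged into one kernel-verified Lean document; each statement's English description precedes it below -/
import Mathlib

section
/- If a tax policy T ∈ 𝒯 is locally optimal — i.e. there is a neighborhood N of T such that every T̃ ∈ N with R(T̃) = R(T) satisfies W^g_T(T) ≥ W^g_T(T̃) — then T is locally Pareto optimal: there is a neighborhood N′ of T such that for every T̃ ∈ N′ with R(T) = R(T̃), if the set of agents i with U_i(T̃) > U_i(T) has positive Lebesgue measure, then the set of agents i with U_i(T) > U_i(T̃) also has positive Lebesgue measure. -/
open Set MeasureTheory

noncomputable section

namespace Stmt2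

abbrev Chars (n : ℕ) := EuclideanSpace ℝ (Fin n)

/-- Membership in the set `𝒯` of tax policies. -/
def IsTaxPolicy {n : ℕ} (zbar : ℝ) (X : Set (Chars n)) (T : ℝ → Chars n → ℝ) : Prop :=
  ContinuousOn (fun p : ℝ × Chars n => T p.1 p.2) (Icc 0 zbar ×ˢ X) ∧
  (∀ x ∈ X, ∀ z ∈ Icc (0:ℝ) zbar, DifferentiableAt ℝ (fun w => T w x) z) ∧
  (∀ x ∈ X, ∀ z ∈ Icc (0:ℝ) zbar, DifferentiableAt ℝ (deriv fun w => T w x) z) ∧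
  ContinuousOn (fun p : ℝ × Chars n => deriv (fun w => T w p.2) p.1) (Icc 0 zbar ×ˢ X) ∧
  ContinuousOn (fun p : ℝ × Chars n => deriv (deriv fun w => T w p.2) p.1) (Icc 0 zbar ×ˢ X)

/-- `T` and `T'` are within `δ` in the norm `p(T) = max (|T| + |∂_z T| + |∂²_z T|)`. -/
def PClose {n : ℕ} (zbar : ℝ) (X : Set (Chars n)) (T T' : ℝ → Chars n → ℝ) (δ : ℝ) : Prop :=
  ∀ z ∈ Icc (0:ℝ) zbar, ∀ x ∈ X,
    |T z x - T' z x| + |deriv (fun w => T w x) z - deriv (fun w => T' w x) z| +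
      |deriv (deriv fun w => T w x) z - deriv (deriv fun w => T' w x) z| < δ

/-- `Ũ_i(T)`: agent `i`'s indirect utility in dollar terms. -/
def Util {n m : ℕ} (v : ℝ → Chars n → Chars m → ℝ) (x : ℝ → Chars n) (y : ℝ → Chars m)
    (zopt : (ℝ → Chars n → ℝ) → ℝ → ℝ) (T : ℝ → Chars n → ℝ) (i : ℝ) : ℝ :=
  zopt T i - T (zopt T i) (x i) - v (zopt T i) (x i) (y i)

/-- `g_i(T)`: agent `i`'s generalized social marginal welfare weight at `T`. -/
def gWt {n m : ℕ} (g : ℝ → ℝ → Chars n → Chars m → ℝ) (x : ℝ → Chars n) (y : ℝ → Chars m)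
    (zopt : (ℝ → Chars n → ℝ) → ℝ → ℝ) (T : ℝ → Chars n → ℝ) (i : ℝ) : ℝ :=
  g (zopt T i - T (zopt T i) (x i)) (zopt T i) (x i) (y i)

/-- The local social welfare function `W^g_{T̃}(T) = ∫₀¹ g_i(T̃) Ũ_i(T) di`. -/
def Wloc {n m : ℕ} (g : ℝ → ℝ → Chars n → Chars m → ℝ) (v : ℝ → Chars n → Chars m → ℝ)
    (x : ℝ → Chars n) (y : ℝ → Chars m) (zopt : (ℝ → Chars n → ℝ) → ℝ → ℝ)
    (Ttil T : ℝ → Chars n → ℝ) : ℝ :=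
  ∫ i in (0:ℝ)..1, gWt g x y zopt Ttil i * Util v x y zopt T i

/-- Revenue `R(T) = ∫₀¹ T_i(z_i(T)) di`. -/
def Rev {n : ℕ} (x : ℝ → Chars n) (zopt : (ℝ → Chars n → ℝ) → ℝ → ℝ)
    (T : ℝ → Chars n → ℝ) : ℝ :=
  ∫ i in (0:ℝ)..1, T (zopt T i) (x i)

/-! A revenue-neutral Pareto improvement `T̃` near `T` would, because every welfare weight
`g_i(T)` is positive, strictly raise `W^g_T`: its losers are null and its winners are not.
This contradicts the local optimality of `T`. -/

theorem intervalIntegral_mul_lt_of_measure_setOf_lt {μ : Measure ℝ} [NullSingletonClass μ]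
    {a b : ℝ} (hab : a ≤ b) {w f g : ℝ → ℝ} (hw : ∀ t ∈ Icc a b, 0 < w t)
    (hfi : IntervalIntegrable (fun t => w t * f t) μ a b)
    (hgi : IntervalIntegrable (fun t => w t * g t) μ a b)
    (hle : μ {t | t ∈ Icc a b ∧ g t < f t} = 0) (hlt : 0 < μ {t | t ∈ Icc a b ∧ f t < g t}) :
    ∫ t in a..b, w t * f t ∂μ < ∫ t in a..b, w t * g t ∂μ := by
  refine intervalIntegral.integral_lt_integral_of_ae_le_of_measure_setOfPred_lt_ne_zero
    hab hfi hgi ?_ ?_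
  · rw [Filter.EventuallyLE, ae_restrict_iff' measurableSet_Ioc]
    filter_upwards [measure_eq_zero_iff_ae_notMem.1 hle] with t hnot ht
    have ht' : t ∈ Icc a b := Ioc_subset_Icc_self ht
    exact mul_le_mul_of_nonneg_left (not_lt.1 fun h => hnot ⟨ht', h⟩) (hw t ht').le
  · rw [Measure.restrict_apply' measurableSet_Ioc, ← pos_iff_ne_zero]
    have hsub : {t | t ∈ Icc a b ∧ f t < g t} ⊆
        ({t | w t * f t < w t * g t} ∩ Ioc a b) ∪ {a} := by
      rintro t ⟨ht, hfg⟩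
      rcases eq_or_lt_of_le ht.1 with rfl | hat
      · exact Or.inr rfl
      · exact Or.inl ⟨mul_lt_mul_of_pos_left hfg (hw t ht), hat, ht.2⟩
    calc 0 < μ {t | t ∈ Icc a b ∧ f t < g t} := hlt
      _ ≤ μ ({t | w t * f t < w t * g t} ∩ Ioc a b) + μ {a} :=
        (measure_mono hsub).trans (measure_union_le _ _)
      _ = μ ({t | w t * f t < w t * g t} ∩ Ioc a b) := by rw [measure_singleton, add_zero]

theorem stmt2_general {n m : ℕ} (zbar : ℝ)
    (X : Set (Chars n))
    (x : ℝ → Chars n) (y : ℝ → Chars m)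
    (u : ℝ → ℝ) (hu_mono : StrictMono u)
    (v : ℝ → Chars n → Chars m → ℝ)
    (zopt : (ℝ → Chars n → ℝ) → ℝ → ℝ)
    (g : ℝ → ℝ → Chars n → Chars m → ℝ)
    (hg_pos : ∀ c z a b, 0 < g c z a b)
    (hg_int : ∀ T T', IsTaxPolicy zbar X T → IsTaxPolicy zbar X T' →
      IntervalIntegrable (fun i => gWt g x y zopt T i * Util v x y zopt T' i) volume 0 1)
    -- the tax policy under consideration
    (T : ℝ → Chars n → ℝ) (hT : IsTaxPolicy zbar X T)
    -- `T` is locally optimal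
    (hopt : ∃ δ > 0, ∀ Ttil, IsTaxPolicy zbar X Ttil → PClose zbar X T Ttil δ →
      Rev x zopt Ttil = Rev x zopt T →
      Wloc g v x y zopt T Ttil ≤ Wloc g v x y zopt T T) :
    -- `T` is locally Pareto optimal
    ∃ δ > 0, ∀ Ttil, IsTaxPolicy zbar X Ttil → PClose zbar X T Ttil δ →
      Rev x zopt T = Rev x zopt Ttil →
      0 < volume {i : ℝ | i ∈ Icc (0:ℝ) 1 ∧
        u (Util v x y zopt T i) < u (Util v x y zopt Ttil i)} →
      0 < volume {i : ℝ | i ∈ Icc (0:ℝ) 1 ∧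
        u (Util v x y zopt Ttil i) < u (Util v x y zopt T i)} := by
  obtain ⟨δ, hδ, hW⟩ := hopt
  refine ⟨δ, hδ, fun Ttil hTt hclose hRev hgain => ?_⟩
  simp only [hu_mono.lt_iff_lt] at hgain ⊢
  refine pos_iff_ne_zero.2 fun hnoLoss => (hW Ttil hTt hclose hRev.symm).not_gt ?_
  exact intervalIntegral_mul_lt_of_measure_setOf_lt zero_le_one (fun _ _ => hg_pos _ _ _ _)
    (hg_int T T hT hT) (hg_int T Ttil hT hTt) hnoLoss hgain

/-- **Proposition (Sher 2021, Proposition `Pareto proposition`).** If a tax policy `T ∈ 𝒯`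
is locally optimal, then `T` is locally Pareto optimal. -/
theorem stmt2 {n m : ℕ} (zbar : ℝ) (hzbar : 0 < zbar)
    (X : Set (Chars n)) (Y : Set (Chars m)) (hX : IsCompact X) (hY : IsCompact Y)
    (x : ℝ → Chars n) (y : ℝ → Chars m)
    (hx : {i : ℝ | ¬ ContinuousAt x i}.Finite) (hy : {i : ℝ | ¬ ContinuousAt y i}.Finite)
    (u : ℝ → ℝ) (hu_mono : StrictMono u) (hu_conc : ConcaveOn ℝ univ u)
    (hu_smooth : ContDiff ℝ 2 u)
    (v : ℝ → Chars n → Chars m → ℝ)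
    (hv_cont : ContinuousOn (fun p : ℝ × Chars n × Chars m => v p.1 p.2.1 p.2.2)
      (Icc 0 zbar ×ˢ X ×ˢ Y))
    (hv_mono : ∀ a ∈ X, ∀ b ∈ Y, StrictMonoOn (fun z => v z a b) (Icc 0 zbar))
    (hv_d1 : ∀ a ∈ X, ∀ b ∈ Y, ∀ z ∈ Icc (0:ℝ) zbar, DifferentiableAt ℝ (fun w => v w a b) z)
    (hv_d2 : ∀ a ∈ X, ∀ b ∈ Y, ∀ z ∈ Icc (0:ℝ) zbar,
      DifferentiableAt ℝ (deriv fun w => v w a b) z)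
    (hv_c1 : ContinuousOn (fun p : ℝ × Chars n × Chars m =>
      deriv (fun w => v w p.2.1 p.2.2) p.1) (Icc 0 zbar ×ˢ X ×ˢ Y))
    (hv_c2 : ContinuousOn (fun p : ℝ × Chars n × Chars m =>
      deriv (deriv fun w => v w p.2.1 p.2.2) p.1) (Icc 0 zbar ×ˢ X ×ˢ Y))
    (hv_bar : ∀ i : ℝ, 1 < deriv (fun w => v w (x i) (y i)) zbar)
    (zopt : (ℝ → Chars n → ℝ) → ℝ → ℝ)
    (hzopt_max : ∀ T, IsTaxPolicy zbar X T → ∀ i : ℝ, zopt T i ∈ Icc (0:ℝ) zbar ∧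
      IsMaxOn (fun z => z - T z (x i) - v z (x i) (y i)) (Icc 0 zbar) (zopt T i))
    (hzopt_unique : ∀ T, IsTaxPolicy zbar X T →
      ∀ᵐ i ∂(volume.restrict (Icc (0:ℝ) 1)), ∀ z ∈ Icc (0:ℝ) zbar,
        IsMaxOn (fun w => w - T w (x i) - v w (x i) (y i)) (Icc 0 zbar) z → z = zopt T i)
    (g : ℝ → ℝ → Chars n → Chars m → ℝ)
    (hg_pos : ∀ c z a b, 0 < g c z a b)
    (hg_int : ∀ T T', IsTaxPolicy zbar X T → IsTaxPolicy zbar X T' →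
      IntervalIntegrable (fun i => gWt g x y zopt T i * Util v x y zopt T' i) volume 0 1)
    -- the tax policy under consideration
    (T : ℝ → Chars n → ℝ) (hT : IsTaxPolicy zbar X T)
    -- `T` is locally optimal
    (hopt : ∃ δ > 0, ∀ Ttil, IsTaxPolicy zbar X Ttil → PClose zbar X T Ttil δ →
      Rev x zopt Ttil = Rev x zopt T →
      Wloc g v x y zopt T Ttil ≤ Wloc g v x y zopt T T) :
    -- `T` is locally Pareto optimal
    ∃ δ > 0, ∀ Ttil, IsTaxPolicy zbar X Ttil → PClose zbar X T Ttil δ →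
      Rev x zopt T = Rev x zopt Ttil →
      0 < volume {i : ℝ | i ∈ Icc (0:ℝ) 1 ∧
        u (Util v x y zopt T i) < u (Util v x y zopt Ttil i)} →
      0 < volume {i : ℝ | i ∈ Icc (0:ℝ) 1 ∧
        u (Util v x y zopt Ttil i) < u (Util v x y zopt T i)} :=
  stmt2_general zbar X x y u hu_mono v zopt g hg_pos hg_int T hT hopt

end Stmt2
end
end

section
/- In the three-region example — three observable types (East Coast for i ∈ [0,1/3), Interior for i ∈ [1/3,2/3], West Coast for i ∈ (2/3,1]), common cost of income v(z) = z²/2, quasilinear utility c − v(z), taxes allowed to condition on income and observable type, and libertarian welfare weights identical across agents, g_i(c,z) = g(z − c) with g positive and strictly increasing — there does not exist a preorder that rationalizes g; moreover, any binary relation that rationalizes g contains a cycle of the form T₀ ≺ T₁ ∼ T₂ ≺ T₃ ∼ T₀ among four tax policies all raising the same revenue. -/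
/-!
All tax schedules used are quadratic valleys `T(z; r) = z - z²/2 - V_r + (z - Z_r)²`, under
which region `r` has utility `V_r - (z - Z_r)²`, earns `Z_r` and pays `Z_r - Z_r²/2 - V_r`.
Along a path of such schedules incomes respond, but by the envelope theorem only `V` enters the
marginal welfare integral, which becomes `-(1/3) ∑_r g(tax_r) V_r'`.

Shifting utility from the Interior to the East Coast, which pays more tax, is therefore a strict
improvement, and doing it twice gives `T₀ ≺ T₁ ∼ T₁ ≺ T₃`. Yet the shift can be undone at no
marginal welfare cost: first move the Interior's income until it pays exactly the East Coast's
tax, undo the shift while keeping the two taxes equal, then move the income back, letting the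
West Coast's income compensate so that revenue stays constant. Hence `T₃ ∼ T₀`.
-/

open Set MeasureTheory

noncomputable section

namespace Stmt5

/-- The observable region of agent `i ∈ [0,1]`: East Coast (`0`) for `i ∈ [0,1/3)`,
Interior (`1`) for `i ∈ [1/3,2/3]`, West Coast (`2`) for `i ∈ (2/3,1]`. -/
def reg (i : ℝ) : Fin 3 := if i < 1/3 then 0 else if i ≤ 2/3 then 1 else 2

/-- Agent `i`'s objective under tax policy `T`, with cost of income `v(z) = z²/2`. -/
def obj (T : ℝ → Fin 3 → ℝ) (i : ℝ) (z : ℝ) : ℝ := z - T z (reg i) - z^2 / 2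

/-- Revenue `R(T) = ∫₀¹ T_i(z_i(T)) di`. -/
def Rev (zopt : (ℝ → Fin 3 → ℝ) → ℝ → ℝ) (T : ℝ → Fin 3 → ℝ) : ℝ :=
  ∫ i in (0:ℝ)..1, T (zopt T i) (reg i)

/-- Libertarian welfare weight of agent `i` at tax policy `T`: `g` of the tax paid. -/
def gWt (g : ℝ → ℝ) (zopt : (ℝ → Fin 3 → ℝ) → ℝ → ℝ) (T : ℝ → Fin 3 → ℝ) (i : ℝ) : ℝ :=
  g (T (zopt T i) (reg i))

/-- A smooth constant-revenue path of tax policies. -/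
def IsPath (zopt : (ℝ → Fin 3 → ℝ) → ℝ → ℝ) (a b : ℝ) (ρ : ℝ → ℝ → Fin 3 → ℝ) : Prop :=
  a < 0 ∧ 1 < b ∧
  (∀ r : Fin 3, ContDiff ℝ 1 (fun p : ℝ × ℝ => ρ p.2 p.1 r)) ∧
  (∀ θ ∈ Icc a b,
    {i₀ : ℝ | ∃ z, ¬ ContinuousAt (fun i => deriv (fun θ' => ρ θ' z (reg i)) θ) i₀}.Finite) ∧
  (∀ θ ∈ Icc a b, Rev zopt (ρ θ) = Rev zopt (ρ 0))

/-- `rel` rationalizes `g`: local improvement and indifference principles along every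
smooth constant-revenue path. -/
def Rationalizes (g : ℝ → ℝ) (zopt : (ℝ → Fin 3 → ℝ) → ℝ → ℝ)
    (rel : (ℝ → Fin 3 → ℝ) → (ℝ → Fin 3 → ℝ) → Prop) : Prop :=
  ∀ a b : ℝ, ∀ ρ : ℝ → ℝ → Fin 3 → ℝ, IsPath zopt a b ρ →
    (((∫ i in (0:ℝ)..1,
        gWt g zopt (ρ 0) i * deriv (fun θ => ρ θ (zopt (ρ 0) i) (reg i)) 0) < 0 →
      ∃ θb ∈ Ioc (0:ℝ) 1, ∀ θ ∈ Ioo 0 θb, rel (ρ 0) (ρ θ) ∧ ¬ rel (ρ θ) (ρ 0)) ∧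
    (0 < (∫ i in (0:ℝ)..1,
        gWt g zopt (ρ 0) i * deriv (fun θ => ρ θ (zopt (ρ 0) i) (reg i)) 0) →
      ∃ θb ∈ Ioc (0:ℝ) 1, ∀ θ ∈ Ioo 0 θb, rel (ρ θ) (ρ 0) ∧ ¬ rel (ρ 0) (ρ θ))) ∧
    ((∀ θ' ∈ Icc (0:ℝ) 1, (∫ i in (0:ℝ)..1,
        gWt g zopt (ρ θ') i * deriv (fun θ => ρ θ (zopt (ρ θ') i) (reg i)) θ') = 0) →
      rel (ρ 0) (ρ 1) ∧ rel (ρ 1) (ρ 0))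


open Real

def SelectsMaximizer (zopt : (ℝ → Fin 3 → ℝ) → ℝ → ℝ) : Prop :=
  ∀ T : ℝ → Fin 3 → ℝ, ∀ i : ℝ,
    (∃! z : ℝ, IsMaxOn (obj T i) univ z) → IsMaxOn (obj T i) univ (zopt T i)

def welfareDeriv (g : ℝ → ℝ) (zopt : (ℝ → Fin 3 → ℝ) → ℝ → ℝ) (ρ : ℝ → ℝ → Fin 3 → ℝ)
    (θ₀ : ℝ) : ℝ :=
  ∫ i in (0:ℝ)..1, gWt g zopt (ρ θ₀) i * deriv (fun θ => ρ θ (zopt (ρ θ₀) i) (reg i)) θ₀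

lemma reg_of_lt {i : ℝ} (h : i < 1/3) : reg i = 0 := if_pos h

lemma reg_of_mem_Icc {i : ℝ} (h : i ∈ Icc (1/3 : ℝ) (2/3)) : reg i = 1 := by
  rw [reg, if_neg h.1.not_gt, if_pos h.2]

lemma reg_of_gt {i : ℝ} (h : 2/3 < i) : reg i = 2 := by
  rw [reg, if_neg (by linarith), if_neg h.not_ge]

lemma intervalIntegral_comp_reg (f : Fin 3 → ℝ) :
    ∫ i in (0:ℝ)..1, f (reg i) = (∑ r, f r) / 3 := by
  have piece : ∀ {a b : ℝ} (r : Fin 3), a ≤ b →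
      EqOn (fun i => f (reg i)) (fun _ => f r) (Ioo a b) →
      IntervalIntegrable (fun i => f (reg i)) volume a b ∧
        ∫ i in a..b, f (reg i) = (b - a) * f r := fun r hab h =>
    ⟨intervalIntegrable_const.congr_uIoo (by rw [uIoo_of_le hab]; exact h.symm), by
      rw [intervalIntegral.integral_congr_Ioo_of_le hab h, intervalIntegral.integral_const,
        smul_eq_mul]⟩
  obtain ⟨hI₀, e₀⟩ := piece (a := 0) (b := 1/3) 0 (by norm_num) fun i hi => by
    simp only [reg_of_lt hi.2]
  obtain ⟨hI₁, e₁⟩ := piece (a := 1/3) (b := 2/3) 1 (by norm_num) fun i hi => by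
    simp only [reg_of_mem_Icc (Ioo_subset_Icc_self hi)]
  obtain ⟨hI₂, e₂⟩ := piece (a := 2/3) (b := 1) 2 (by norm_num) fun i hi => by
    simp only [reg_of_gt hi.1]
  rw [← intervalIntegral.integral_add_adjacent_intervals hI₀ (hI₁.trans hI₂),
    ← intervalIntegral.integral_add_adjacent_intervals hI₁ hI₂, e₀, e₁, e₂, Fin.sum_univ_three]
  ring

lemma reg_eventuallyEq {i₀ : ℝ} (h₁ : i₀ ≠ 1/3) (h₂ : i₀ ≠ 2/3) :
    reg =ᶠ[nhds i₀] fun _ => reg i₀ := by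
  rcases h₁.lt_or_gt with h₁ | h₁
  · filter_upwards [Iio_mem_nhds h₁] with i hi
    rw [reg_of_lt hi, reg_of_lt h₁]
  rcases h₂.lt_or_gt with h₂ | h₂
  · filter_upwards [Ioo_mem_nhds h₁ h₂] with i hi
    rw [reg_of_mem_Icc (Ioo_subset_Icc_self hi), reg_of_mem_Icc ⟨h₁.le, h₂.le⟩]
  · filter_upwards [Ioi_mem_nhds h₂] with i hi
    rw [reg_of_gt hi, reg_of_gt h₂]

lemma finite_setOf_not_continuousAt_comp_reg (F : ℝ → Fin 3 → ℝ) :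
    {i₀ : ℝ | ∃ z, ¬ ContinuousAt (fun i => F z (reg i)) i₀}.Finite := by
  refine ((finite_singleton (2/3 : ℝ)).insert (1/3)).subset fun i₀ ⟨z, hz⟩ => ?_
  by_contra hi₀
  simp only [mem_insert_iff, mem_singleton_iff, not_or] at hi₀
  exact hz <| continuousAt_const.congr <|
    ((reg_eventuallyEq hi₀.1 hi₀.2).fun_comp (F z)).symm

lemma Rationalizes.rel_self {g : ℝ → ℝ} {zopt : (ℝ → Fin 3 → ℝ) → ℝ → ℝ}
    {rel : (ℝ → Fin 3 → ℝ) → (ℝ → Fin 3 → ℝ) → Prop} (hrat : Rationalizes g zopt rel)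
    {T : ℝ → Fin 3 → ℝ} (hT : ∀ r, ContDiff ℝ 1 fun z => T z r) : rel T T := by
  have hρ : IsPath zopt (-1) 2 fun _ => T :=
    ⟨by norm_num, by norm_num, fun r => (hT r).comp contDiff_fst,
      fun θ _ => finite_setOf_not_continuousAt_comp_reg fun z r => deriv (fun _ => T z r) θ,
      fun _ _ => rfl⟩
  refine ((hrat _ _ _ hρ).2 fun θ _ => ?_).1
  simp only [deriv_const, mul_zero, intervalIntegral.integral_zero]

def quadTax (V Z : Fin 3 → ℝ) : ℝ → Fin 3 → ℝ :=
  fun z r => z - z ^ 2 / 2 - V r + (z - Z r) ^ 2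

lemma contDiff_quadTax (V Z : Fin 3 → ℝ) (r : Fin 3) :
    ContDiff ℝ 1 fun z => quadTax V Z z r := by
  unfold quadTax; fun_prop

lemma obj_quadTax (V Z : Fin 3 → ℝ) (i z : ℝ) :
    obj (quadTax V Z) i z = V (reg i) - (z - Z (reg i)) ^ 2 := by
  simp only [obj, quadTax]; ring

lemma isMaxOn_obj_quadTax_iff (V Z : Fin 3 → ℝ) (i y : ℝ) :
    IsMaxOn (obj (quadTax V Z) i) univ y ↔ y = Z (reg i) := by
  simp only [isMaxOn_univ_iff, obj_quadTax]
  constructor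
  · intro h
    nlinarith [h (Z (reg i)), sq_nonneg (y - Z (reg i))]
  · rintro rfl x
    nlinarith [sq_nonneg (x - Z (reg i))]

lemma SelectsMaximizer.zopt_quadTax {zopt : (ℝ → Fin 3 → ℝ) → ℝ → ℝ}
    (hzopt : SelectsMaximizer zopt) (V Z : Fin 3 → ℝ) (i : ℝ) :
    zopt (quadTax V Z) i = Z (reg i) :=
  (isMaxOn_obj_quadTax_iff V Z i _).1 <| hzopt _ i
    ⟨Z (reg i), (isMaxOn_obj_quadTax_iff V Z i _).2 rfl,
      fun _ => (isMaxOn_obj_quadTax_iff V Z i _).1⟩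

lemma quadTax_self (V Z : Fin 3 → ℝ) (r : Fin 3) :
    quadTax V Z (Z r) r = Z r - Z r ^ 2 / 2 - V r := by
  simp [quadTax]

lemma SelectsMaximizer.rev_quadTax {zopt : (ℝ → Fin 3 → ℝ) → ℝ → ℝ}
    (hzopt : SelectsMaximizer zopt) (V Z : Fin 3 → ℝ) :
    Rev zopt (quadTax V Z) = (∑ r, (Z r - Z r ^ 2 / 2 - V r)) / 3 := by
  simp only [Rev, hzopt.zopt_quadTax, ← quadTax_self]
  exact intervalIntegral_comp_reg fun r => quadTax V Z (Z r) r

-- The envelope theorem: agents sit at the bottom of the valley, so only `V` moves their tax.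
lemma hasDerivAt_quadTax {V Z : ℝ → Fin 3 → ℝ} {θ₀ V' : ℝ} {r : Fin 3}
    (hV : HasDerivAt (fun θ => V θ r) V' θ₀) (hZ : DifferentiableAt ℝ (fun θ => Z θ r) θ₀) :
    HasDerivAt (fun θ => quadTax (V θ) (Z θ) (Z θ₀ r) r) (-V') θ₀ := by
  have h : HasDerivAt (fun θ => quadTax (V θ) (Z θ) (Z θ₀ r) r)
      (0 - V' + 2 * (Z θ₀ r - Z θ₀ r) ^ 1 * (0 - deriv (fun θ => Z θ r) θ₀)) θ₀ :=
    ((hasDerivAt_const θ₀ _).sub hV).add (((hasDerivAt_const θ₀ _).sub hZ.hasDerivAt).pow 2)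
  simpa using h

def transferPath (v : ℝ → ℝ) (Z : ℝ → Fin 3 → ℝ) : ℝ → ℝ → Fin 3 → ℝ :=
  fun θ => quadTax ![v θ, -v θ, 0] (Z θ)

lemma welfareDeriv_transferPath {g : ℝ → ℝ} {zopt : (ℝ → Fin 3 → ℝ) → ℝ → ℝ}
    (hzopt : SelectsMaximizer zopt) {v : ℝ → ℝ} {Z : ℝ → Fin 3 → ℝ} {θ₀ v' : ℝ}
    (hv : HasDerivAt v v' θ₀) (hZ : ∀ r, DifferentiableAt ℝ (fun θ => Z θ r) θ₀) :
    welfareDeriv g zopt (transferPath v Z) θ₀ =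
      v' * (g (Z θ₀ 1 - Z θ₀ 1 ^ 2 / 2 + v θ₀) - g (Z θ₀ 0 - Z θ₀ 0 ^ 2 / 2 - v θ₀)) / 3 := by
  set V' : Fin 3 → ℝ := ![v', -v', 0]
  have hV : ∀ r, HasDerivAt (fun θ => ![v θ, -v θ, 0] r) (V' r) θ₀ := by
    intro r; fin_cases r
    exacts [hv, hv.neg, hasDerivAt_const θ₀ 0]
  have integrand : ∀ i, gWt g zopt (transferPath v Z θ₀) i *
      deriv (fun θ => transferPath v Z θ (zopt (transferPath v Z θ₀) i) (reg i)) θ₀ =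
      (fun r => g (quadTax ![v θ₀, -v θ₀, 0] (Z θ₀) (Z θ₀ r) r) * -V' r) (reg i) := by
    intro i
    simp only [gWt, transferPath, hzopt.zopt_quadTax, (hasDerivAt_quadTax (hV _) (hZ _)).deriv]
  rw [welfareDeriv, intervalIntegral.integral_congr fun i _ => integrand i,
    intervalIntegral_comp_reg fun r => g (quadTax ![v θ₀, -v θ₀, 0] (Z θ₀) (Z θ₀ r) r) * -V' r]
  simp only [Fin.sum_univ_three, quadTax_self, V', sub_neg_eq_add, Matrix.cons_val_zero,
    Matrix.cons_val_one, Matrix.cons_val_two, Matrix.head_cons, Matrix.tail_cons]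
  ring

lemma isPath_transferPath {zopt : (ℝ → Fin 3 → ℝ) → ℝ → ℝ} (hzopt : SelectsMaximizer zopt)
    {v : ℝ → ℝ} {Z : ℝ → Fin 3 → ℝ} (hv : ContDiff ℝ 1 v)
    (hZ : ∀ r, ContDiff ℝ 1 fun θ => Z θ r)
    (hrev : ∀ θ, ∑ r, (Z θ r - Z θ r ^ 2 / 2) = ∑ r, (Z 0 r - Z 0 r ^ 2 / 2)) :
    IsPath zopt (-1) 2 (transferPath v Z) := by
  refine ⟨by norm_num, by norm_num, fun r => ?_,
    fun θ _ => finite_setOf_not_continuousAt_comp_reg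
      fun z r => deriv (fun θ' => transferPath v Z θ' z r) θ, fun θ _ => ?_⟩
  · have hV : ContDiff ℝ 1 fun θ => ![v θ, -v θ, 0] r := by
      fin_cases r
      exacts [hv, hv.neg, contDiff_const]
    exact ((contDiff_fst.sub (contDiff_fst.pow 2 |>.div_const 2)).sub (hV.comp contDiff_snd)).add
      ((contDiff_fst.sub ((hZ r).comp contDiff_snd)).pow 2)
  · have hsum : ∀ θ, Rev zopt (transferPath v Z θ) = (∑ r, (Z θ r - Z θ r ^ 2 / 2)) / 3 := by
      intro θ
      simp [transferPath, hzopt.rev_quadTax, Fin.sum_univ_three]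
    rw [hsum, hsum, hrev]

-- The East Coast pays `1/2 - c`, the Interior `c` and the West Coast `1/2`.
def transferTax (c : ℝ) : ℝ → Fin 3 → ℝ := quadTax ![c, -c, 0] ![1, 0, 1]

lemma SelectsMaximizer.rev_transferTax {zopt : (ℝ → Fin 3 → ℝ) → ℝ → ℝ}
    (hzopt : SelectsMaximizer zopt) (c : ℝ) : Rev zopt (transferTax c) = 1/3 := by
  norm_num [transferTax, hzopt.rev_quadTax, Fin.sum_univ_three, Matrix.cons_val_two]

lemma Rationalizes.exists_transferTax_lt {g : ℝ → ℝ} {zopt : (ℝ → Fin 3 → ℝ) → ℝ → ℝ}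
    {rel : (ℝ → Fin 3 → ℝ) → (ℝ → Fin 3 → ℝ) → Prop} (hrat : Rationalizes g zopt rel)
    (hzopt : SelectsMaximizer zopt) (hg : StrictMono g) {c : ℝ} (hc : c < 1/4) :
    ∃ c' ∈ Ioc c (c + 1/8),
      rel (transferTax c) (transferTax c') ∧ ¬ rel (transferTax c') (transferTax c) := by
  have hρ : IsPath zopt (-1) 2 (transferPath (c + ·) fun _ => ![1, 0, 1]) :=
    isPath_transferPath hzopt (contDiff_const.add contDiff_id) (fun _ => contDiff_const)
      fun _ => rfl
  have hneg : welfareDeriv g zopt (transferPath (c + ·) fun _ => ![1, 0, 1]) 0 < 0 := by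
    rw [welfareDeriv_transferPath hzopt (Z := fun _ => ![1, 0, 1]) ((hasDerivAt_id' 0).const_add c)
      fun _ => differentiableAt_const _]
    norm_num
    linarith [hg (show c < 1/2 - c by linarith)]
  obtain ⟨θb, hθb, hlt⟩ := (hrat _ _ _ hρ).1.1 hneg
  refine ⟨c + θb / 8, ⟨by linarith [hθb.1], by linarith [hθb.2]⟩, ?_⟩
  simpa [transferPath, transferTax] using hlt (θb / 8) ⟨by linarith [hθb.1], by linarith [hθb.1]⟩

def turnAngle (s θ : ℝ) : ℝ :=
  arccos (-2 * √s) + (π / 2 - arccos (-2 * √s)) * smoothTransition (3 * θ - 1)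

def loopUtility (s θ : ℝ) : ℝ := cos (turnAngle s θ) ^ 2 / 4

def loopAngle (s θ : ℝ) : ℝ :=
  π * (1 - smoothTransition (3 * θ)) + turnAngle s θ * smoothTransition (3 * θ)
    + π / 2 * smoothTransition (3 * θ - 2)

def loopIncome (s θ : ℝ) : Fin 3 → ℝ := ![1, 1 + cos (loopAngle s θ), 1 + sin (loopAngle s θ)]

lemma contDiff_turnAngle (s : ℝ) : ContDiff ℝ 1 (turnAngle s) :=
  contDiff_const.add (contDiff_const.mul (smoothTransition.contDiff.comp
    ((contDiff_const.mul contDiff_id).sub contDiff_const)))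

lemma contDiff_loopUtility (s : ℝ) : ContDiff ℝ 1 (loopUtility s) :=
  ((contDiff_cos.comp (contDiff_turnAngle s)).pow 2).div_const 4

lemma contDiff_loopAngle (s : ℝ) : ContDiff ℝ 1 (loopAngle s) := by
  have h₁ : ContDiff ℝ 1 fun θ : ℝ => smoothTransition (3 * θ) :=
    smoothTransition.contDiff.comp (contDiff_const.mul contDiff_id)
  have h₂ : ContDiff ℝ 1 fun θ : ℝ => smoothTransition (3 * θ - 2) :=
    smoothTransition.contDiff.comp ((contDiff_const.mul contDiff_id).sub contDiff_const)
  exact ((contDiff_const.mul (contDiff_const.sub h₁)).add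
    ((contDiff_turnAngle s).mul h₁)).add (contDiff_const.mul h₂)

lemma loopUtility_of_le {s θ : ℝ} (hs₀ : 0 ≤ s) (hs₁ : s ≤ 1/4) (hθ : θ ≤ 1/3) :
    loopUtility s θ = s := by
  have hsqrt : √s ≤ 1/2 := by nlinarith [sq_sqrt hs₀, sqrt_nonneg s]
  rw [loopUtility, turnAngle, smoothTransition.zero_of_nonpos (by linarith), mul_zero, add_zero,
    cos_arccos (by linarith [sqrt_nonneg s]) (by linarith [sqrt_nonneg s])]
  nlinarith [sq_sqrt hs₀]

lemma loopUtility_of_ge {s θ : ℝ} (hθ : 2/3 ≤ θ) : loopUtility s θ = 0 := by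
  rw [loopUtility, turnAngle, smoothTransition.one_of_one_le (by linarith), mul_one,
    add_sub_cancel, cos_pi_div_two]
  norm_num

lemma deriv_loopUtility_of_notMem_Icc {s θ : ℝ} (hs₀ : 0 ≤ s) (hs₁ : s ≤ 1/4)
    (hθ : θ ∉ Icc (1/3 : ℝ) (2/3)) : deriv (loopUtility s) θ = 0 := by
  rcases not_and_or.mp hθ with hθ | hθ
  · have : loopUtility s =ᶠ[nhds θ] fun _ => s := by
      filter_upwards [Iio_mem_nhds (not_le.mp hθ)] with θ' hθ'
      exact loopUtility_of_le hs₀ hs₁ hθ'.le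
    rw [this.deriv_eq, deriv_const]
  · have : loopUtility s =ᶠ[nhds θ] fun _ => 0 := by
      filter_upwards [Ioi_mem_nhds (not_le.mp hθ)] with θ' hθ'
      exact loopUtility_of_ge hθ'.le
    rw [this.deriv_eq, deriv_const]

lemma loopAngle_zero (s : ℝ) : loopAngle s 0 = π := by
  simp [loopAngle, smoothTransition.zero_of_nonpos]

lemma loopAngle_one (s : ℝ) : loopAngle s 1 = π := by
  rw [loopAngle, turnAngle, smoothTransition.one_of_one_le (by norm_num),
    smoothTransition.one_of_one_le (by norm_num), smoothTransition.one_of_one_le (by norm_num)]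
  ring

lemma loopAngle_of_mem_Icc {s θ : ℝ} (hθ : θ ∈ Icc (1/3 : ℝ) (2/3)) :
    loopAngle s θ = turnAngle s θ := by
  rw [loopAngle, smoothTransition.one_of_one_le (by linarith [hθ.1]),
    smoothTransition.zero_of_nonpos (by linarith [hθ.2])]
  ring

-- Revenue stays constant because `(Z₁ - 1)² + (Z₂ - 1)² = 1` along the loop; while the transfer
-- `v` is undone, `(Z₁ - 1)² = 4 v` makes the East Coast and the Interior pay the same tax.
lemma Rationalizes.transferTax_equiv_zero {g : ℝ → ℝ} {zopt : (ℝ → Fin 3 → ℝ) → ℝ → ℝ}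
    {rel : (ℝ → Fin 3 → ℝ) → (ℝ → Fin 3 → ℝ) → Prop} (hrat : Rationalizes g zopt rel)
    (hzopt : SelectsMaximizer zopt) {s : ℝ} (hs₀ : 0 ≤ s) (hs₁ : s ≤ 1/4) :
    rel (transferTax s) (transferTax 0) ∧ rel (transferTax 0) (transferTax s) := by
  have hstart : transferPath (loopUtility s) (loopIncome s) 0 = transferTax s := by
    simp [transferPath, transferTax, loopIncome, loopAngle_zero,
      loopUtility_of_le hs₀ hs₁ (by norm_num : (0:ℝ) ≤ 1/3)]
  have hend : transferPath (loopUtility s) (loopIncome s) 1 = transferTax 0 := by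
    simp [transferPath, transferTax, loopIncome, loopAngle_one,
      loopUtility_of_ge (by norm_num : (2/3:ℝ) ≤ 1)]
  have hZ : ∀ r, ContDiff ℝ 1 fun θ => loopIncome s θ r := by
    intro r; fin_cases r
    exacts [contDiff_const, contDiff_const.add (contDiff_cos.comp (contDiff_loopAngle s)),
      contDiff_const.add (contDiff_sin.comp (contDiff_loopAngle s))]
  have hρ : IsPath zopt (-1) 2 (transferPath (loopUtility s) (loopIncome s)) :=
    isPath_transferPath hzopt (contDiff_loopUtility s) hZ fun θ => by
      simp only [loopIncome, Fin.sum_univ_three, Matrix.cons_val_zero, Matrix.cons_val_one,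
        Matrix.cons_val_two, Matrix.head_cons, Matrix.tail_cons]
      linear_combination (-1/2) * sin_sq_add_cos_sq (loopAngle s θ)
        + (1/2) * sin_sq_add_cos_sq (loopAngle s 0)
  rw [← hstart, ← hend]
  refine (hrat _ _ _ hρ).2 fun θ _ => ?_
  change welfareDeriv g zopt _ θ = 0
  rw [welfareDeriv_transferPath hzopt
    ((contDiff_loopUtility s).differentiable one_ne_zero θ).hasDerivAt
    fun r => (hZ r).differentiable one_ne_zero θ]
  by_cases hθ : θ ∈ Icc (1/3 : ℝ) (2/3)
  · have htax : loopIncome s θ 1 - loopIncome s θ 1 ^ 2 / 2 + loopUtility s θ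
        = loopIncome s θ 0 - loopIncome s θ 0 ^ 2 / 2 - loopUtility s θ := by
      simp only [loopIncome, loopAngle_of_mem_Icc hθ, loopUtility, Matrix.cons_val_zero,
        Matrix.cons_val_one]
      ring
    rw [htax, sub_self, mul_zero, zero_div]
  · rw [deriv_loopUtility_of_notMem_Icc hs₀ hs₁ hθ, zero_mul, zero_div]

lemma Rationalizes.exists_cycle {g : ℝ → ℝ} {zopt : (ℝ → Fin 3 → ℝ) → ℝ → ℝ}
    {rel : (ℝ → Fin 3 → ℝ) → (ℝ → Fin 3 → ℝ) → Prop} (hrat : Rationalizes g zopt rel)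
    (hzopt : SelectsMaximizer zopt) (hg : StrictMono g) :
    ∃ T₀ T₁ T₂ T₃ : ℝ → Fin 3 → ℝ,
      Rev zopt T₁ = Rev zopt T₀ ∧ Rev zopt T₂ = Rev zopt T₀ ∧ Rev zopt T₃ = Rev zopt T₀ ∧
      (rel T₀ T₁ ∧ ¬ rel T₁ T₀) ∧ (rel T₁ T₂ ∧ rel T₂ T₁) ∧
      (rel T₂ T₃ ∧ ¬ rel T₃ T₂) ∧ (rel T₃ T₀ ∧ rel T₀ T₃) := by
  obtain ⟨c₁, hc₁, h01, h10⟩ := hrat.exists_transferTax_lt hzopt hg (c := 0) (by norm_num)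
  obtain ⟨c₃, hc₃, h13, h31⟩ := hrat.exists_transferTax_lt hzopt hg (c := c₁)
    (by linarith [hc₁.2])
  have h11 := hrat.rel_self (contDiff_quadTax ![c₁, -c₁, 0] ![1, 0, 1])
  obtain ⟨h30, h03⟩ := hrat.transferTax_equiv_zero hzopt (s := c₃)
    (by linarith [hc₁.1, hc₃.1]) (by linarith [hc₁.2, hc₃.2])
  have hrev : ∀ c, Rev zopt (transferTax c) = Rev zopt (transferTax 0) := fun c => by
    rw [hzopt.rev_transferTax, hzopt.rev_transferTax]
  exact ⟨transferTax 0, transferTax c₁, transferTax c₁, transferTax c₃, hrev _, hrev _, hrev _,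
    ⟨h01, h10⟩, ⟨h11, h11⟩, ⟨h13, h31⟩, ⟨h30, h03⟩⟩

theorem stmt5_general
    -- optimal incomes: wherever agent `i` has a unique maximizer, `zopt` selects it
    (zopt : (ℝ → Fin 3 → ℝ) → ℝ → ℝ)
    (hzopt : ∀ T : ℝ → Fin 3 → ℝ, ∀ i : ℝ,
      (∃! z : ℝ, IsMaxOn (obj T i) univ z) → IsMaxOn (obj T i) univ (zopt T i))
    -- the libertarian welfare weights, identical across agents
    (g : ℝ → ℝ) (hg_mono : StrictMono g) :
    (¬ ∃ rel : (ℝ → Fin 3 → ℝ) → (ℝ → Fin 3 → ℝ) → Prop,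
      Reflexive rel ∧ Transitive rel ∧ Rationalizes g zopt rel) ∧
    (∀ rel : (ℝ → Fin 3 → ℝ) → (ℝ → Fin 3 → ℝ) → Prop, Rationalizes g zopt rel →
      ∃ T₀ T₁ T₂ T₃ : ℝ → Fin 3 → ℝ,
        Rev zopt T₁ = Rev zopt T₀ ∧ Rev zopt T₂ = Rev zopt T₀ ∧ Rev zopt T₃ = Rev zopt T₀ ∧
        (rel T₀ T₁ ∧ ¬ rel T₁ T₀) ∧ (rel T₁ T₂ ∧ rel T₂ T₁) ∧
        (rel T₂ T₃ ∧ ¬ rel T₃ T₂) ∧ (rel T₃ T₀ ∧ rel T₀ T₃)) := by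
  refine ⟨?_, fun rel hrat => hrat.exists_cycle hzopt hg_mono⟩
  rintro ⟨rel, -, htrans, hrat⟩
  obtain ⟨_, _, _, _, -, -, -, ⟨-, h10⟩, ⟨h12, -⟩, ⟨h23, -⟩, ⟨h30, -⟩⟩ :=
    hrat.exists_cycle hzopt hg_mono
  exact h10 (htrans h12 (htrans h23 h30))

/-- **Proposition (Sher 2021, Proposition `simple contradiction proposition`).**  In the
three-region example with common libertarian weights `g_i(c,z) = g(z−c)`, `g` positive
and strictly increasing, no preorder rationalizes `g`; moreover any binary relation
that rationalizes `g` contains a cycle `T₀ ≺ T₁ ∼ T₂ ≺ T₃ ∼ T₀` among four tax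
policies raising the same revenue. -/
theorem stmt5
    -- optimal incomes: wherever agent `i` has a unique maximizer, `zopt` selects it
    (zopt : (ℝ → Fin 3 → ℝ) → ℝ → ℝ)
    (hzopt : ∀ T : ℝ → Fin 3 → ℝ, ∀ i : ℝ,
      (∃! z : ℝ, IsMaxOn (obj T i) univ z) → IsMaxOn (obj T i) univ (zopt T i))
    -- the libertarian welfare weights, identical across agents
    (g : ℝ → ℝ) (hg_pos : ∀ t, 0 < g t) (hg_mono : StrictMono g) :
    (¬ ∃ rel : (ℝ → Fin 3 → ℝ) → (ℝ → Fin 3 → ℝ) → Prop,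
      Reflexive rel ∧ Transitive rel ∧ Rationalizes g zopt rel) ∧
    (∀ rel : (ℝ → Fin 3 → ℝ) → (ℝ → Fin 3 → ℝ) → Prop, Rationalizes g zopt rel →
      ∃ T₀ T₁ T₂ T₃ : ℝ → Fin 3 → ℝ,
        Rev zopt T₁ = Rev zopt T₀ ∧ Rev zopt T₂ = Rev zopt T₀ ∧ Rev zopt T₃ = Rev zopt T₀ ∧
        (rel T₀ T₁ ∧ ¬ rel T₁ T₀) ∧ (rel T₁ T₂ ∧ rel T₂ T₁) ∧
        (rel T₂ T₃ ∧ ¬ rel T₃ T₂) ∧ (rel T₃ T₀ ∧ rel T₀ T₃)) :=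
  stmt5_general zopt hzopt g hg_mono

end Stmt5
end
end
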